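/- arXiv:1204.4010 — 3 statements merged into one kernel-verified Lean document; each statement's English description precedes it below -/
import Mathlib

section
/- A graph G without isolated vertices is edge domination-critical (i.e., γ(G − e) > γ(G) for every edge e) if and only if G is a disjoint union of stars. -/
open SimpleGraph

variable {V : Type*}

/-- `S` is a dominating set of `G`: every vertex is in `S` or has a neighbor in `S`. -/
def SimpleGraph.IsDomSet (G : SimpleGraph V) (S : Finset V) : Prop :=
  ∀ v : V, v ∈ S ∨ ∃ u ∈ S, G.Adj u v

/-- The domination number of a finite graph. -/
noncomputable def SimpleGraph.domNum [Fintype V] (G : SimpleGraph V) : ℕ :=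
  sInf {n | ∃ S : Finset V, S.card = n ∧ G.IsDomSet S}

/-- The bondage number: the minimum size of a set of edges of `G` whose removal
increases the domination number. -/
noncomputable def SimpleGraph.bondageNum [Fintype V] (G : SimpleGraph V) : ℕ :=
  sInf {n | ∃ B : Finset (Sym2 V), B.card = n ∧ ↑B ⊆ G.edgeSet ∧
    G.domNum < (G.deleteEdges ↑B).domNum}

/--  is a disjoint union of stars: the vertex set splits into centers `C` and
leaves; every leaf is adjacent to exactly one center, no two centers and no two
leaves are adjacent, and every center has at least one leaf. -/
def SimpleGraph.IsDisjointUnionOfStars (G : SimpleGraph V) : Prop :=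
  ∃ C : Set V,
    (∀ v ∉ C, ∃! c, c ∈ C ∧ G.Adj c v) ∧
    (∀ x ∈ C, ∀ y ∈ C, ¬ G.Adj x y) ∧
    (∀ x, x ∉ C → ∀ y, y ∉ C → ¬ G.Adj x y) ∧
    (∀ c ∈ C, ∃ v, G.Adj c v)

/-!
A minimum dominating set `S` of an edge domination-critical graph must stop dominating after the
removal of any edge. Edges inside `S`, edges outside `S`, and edges from `S` to a vertex with a
second neighbour in `S` can all be removed without harm, so `S` is independent, `V \ S` is
independent and every vertex outside `S` has exactly one neighbour in `S`: the graph is a disjoint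
union of stars centred at `S`.

Conversely, the centres `C` of a disjoint union of stars form a dominating set whose closed
neighbourhoods are pairwise disjoint, so every set dominating `C` has at least `|C|` vertices.
Removing an edge `cl` isolates the leaf `l`, which must then lie in every dominating set, on top of
at least `|C|` vertices dominating `C`.
-/

namespace SimpleGraph

variable {G : SimpleGraph V} {S : Finset V}

/-- The closed neighbourhoods of the vertices of `C` are pairwise disjoint (a 2-packing). -/
def IsPacking (G : SimpleGraph V) (C : Set V) : Prop :=
  ∀ w, {c ∈ C | c = w ∨ G.Adj w c}.Subsingleton

theorem IsDomSet.domNum_le [Fintype V] (h : G.IsDomSet S) : G.domNum ≤ S.card :=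
  Nat.sInf_le ⟨S, rfl, h⟩

theorem exists_isDomSet_card_eq_domNum [Fintype V] (G : SimpleGraph V) :
    ∃ S : Finset V, G.IsDomSet S ∧ S.card = G.domNum := by
  obtain ⟨S, hcard, hS⟩ := Nat.sInf_mem (s := {n | ∃ S : Finset V, S.card = n ∧ G.IsDomSet S})
    ⟨_, Finset.univ, rfl, fun v => Or.inl (Finset.mem_univ v)⟩
  exact ⟨S, hS, hcard⟩

theorem lt_domNum_iff [Fintype V] {n : ℕ} :
    n < G.domNum ↔ ∀ S : Finset V, G.IsDomSet S → n < S.card := by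
  refine ⟨fun h S hS => h.trans_le hS.domNum_le, fun h => ?_⟩
  obtain ⟨S, hS, hcard⟩ := G.exists_isDomSet_card_eq_domNum
  exact hcard ▸ h S hS

theorem IsDomSet.deleteEdges_singleton {e : Sym2 V} (hS : G.IsDomSet S)
    (he : ∀ w ∉ S, w ∈ e → ∃ u ∈ S, G.Adj u w ∧ s(u, w) ≠ e) :
    (G.deleteEdges {e}).IsDomSet S := by
  intro w
  by_cases hw : w ∈ S
  · exact Or.inl hw
  obtain ⟨u, huS, huw, hne⟩ : ∃ u ∈ S, G.Adj u w ∧ s(u, w) ≠ e := by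
    obtain ⟨u, huS, huw⟩ := (hS w).resolve_left hw
    by_cases h : s(u, w) = e
    · exact he w hw (h ▸ Sym2.mem_mk_right u w)
    · exact ⟨u, huS, huw, h⟩
  exact Or.inr ⟨u, huS, deleteEdges_adj.2 ⟨huw, hne⟩⟩

theorem IsDomSet.deleteEdges_of_mem_of_mem {x y : V} (hS : G.IsDomSet S) (hx : x ∈ S)
    (hy : y ∈ S) : (G.deleteEdges {s(x, y)}).IsDomSet S :=
  hS.deleteEdges_singleton fun w hw hwe => by
    rcases Sym2.mem_iff.1 hwe with rfl | rfl <;> contradiction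

theorem IsDomSet.deleteEdges_of_notMem_of_notMem {x y : V} (hS : G.IsDomSet S) (hx : x ∉ S)
    (hy : y ∉ S) : (G.deleteEdges {s(x, y)}).IsDomSet S := by
  refine hS.deleteEdges_singleton fun w hw _ => ?_
  obtain ⟨u, huS, huw⟩ := (hS w).resolve_left hw
  refine ⟨u, huS, huw, fun h => ?_⟩
  rcases Sym2.mem_iff.1 (h ▸ Sym2.mem_mk_left u w : u ∈ s(x, y)) with rfl | rfl <;> contradiction

theorem IsDomSet.deleteEdges_of_adj {u v y : V} (hS : G.IsDomSet S) (hu : u ∈ S) (hv : v ∉ S)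
    (hy : y ∈ S) (hyv : G.Adj y v) (hyu : y ≠ u) : (G.deleteEdges {s(u, v)}).IsDomSet S := by
  refine hS.deleteEdges_singleton fun w hw hwe => ?_
  obtain rfl : w = v := (Sym2.mem_iff.1 hwe).resolve_left (by rintro rfl; contradiction)
  refine ⟨y, hy, hyv, fun h => ?_⟩
  rcases Sym2.eq_iff.1 h with ⟨rfl, -⟩ | ⟨rfl, -⟩
  exacts [hyu rfl, hv hy]

theorem isDisjointUnionOfStars_of_isDomSet (hiso : ∀ v : V, ∃ u, G.Adj v u)
    (hS : G.IsDomSet S) (hmin : ∀ e ∈ G.edgeSet, ¬ (G.deleteEdges {e}).IsDomSet S) :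
    G.IsDisjointUnionOfStars := by
  refine ⟨S, fun v hv => ?_, fun x hx y hy hxy => ?_, fun x hx y hy hxy => ?_, fun c _ => hiso c⟩
  · obtain ⟨u, huS, huv⟩ := (hS v).resolve_left hv
    refine ⟨u, ⟨huS, huv⟩, fun y ⟨hyS, hyv⟩ => ?_⟩
    by_contra hyu
    exact hmin _ huv (hS.deleteEdges_of_adj huS hv hyS hyv hyu)
  · exact hmin _ hxy (hS.deleteEdges_of_mem_of_mem hx hy)
  · exact hmin _ hxy (hS.deleteEdges_of_notMem_of_notMem hx hy)

theorem isPacking_of_existsUnique_adj {C : Set V} (hu : ∀ v ∉ C, ∃! c, c ∈ C ∧ G.Adj c v)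
    (hcc : ∀ x ∈ C, ∀ y ∈ C, ¬ G.Adj x y) : G.IsPacking C := by
  rintro w c₁ ⟨hc₁, hw₁⟩ c₂ ⟨hc₂, hw₂⟩
  by_cases hw : w ∈ C
  · have eq_of_mem {c} (hc : c ∈ C) (hcw : c = w ∨ G.Adj w c) : c = w :=
      hcw.resolve_right (hcc w hw c hc)
    rw [eq_of_mem hc₁ hw₁, eq_of_mem hc₂ hw₂]
  · have adj_of_mem {c} (hc : c ∈ C) (hcw : c = w ∨ G.Adj w c) : G.Adj c w :=
      (hcw.resolve_left (by rintro rfl; contradiction)).symm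
    exact (hu w hw).unique ⟨hc₁, adj_of_mem hc₁ hw₁⟩ ⟨hc₂, adj_of_mem hc₂ hw₂⟩

/-- Each vertex of `S` dominates at most one vertex of the packing `C`. -/
theorem IsPacking.card_le {C : Finset V} (hC : G.IsPacking C)
    (hS : ∀ c ∈ C, c ∈ S ∨ ∃ u ∈ S, G.Adj u c) : C.card ≤ S.card :=
  Finset.card_le_card_of_forall_subsingleton (fun c u => c = u ∨ G.Adj u c)
    (fun c hc => (hS c hc).elim (fun h => ⟨c, h, Or.inl rfl⟩)
      fun ⟨u, huS, huc⟩ => ⟨u, huS, Or.inr huc⟩)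
    fun w _ => hC w

theorem domNum_lt_domNum_deleteEdges [Fintype V] {C : Finset V} {c l : V} (hC : G.IsPacking C)
    (hdom : G.IsDomSet C) (hl : l ∉ C) (hleaf : ∀ u, G.Adj u l → u = c) :
    G.domNum < (G.deleteEdges {s(c, l)}).domNum := by
  classical
  have hiso : ∀ u, ¬ (G.deleteEdges {s(c, l)}).Adj u l := by
    intro u hul
    obtain ⟨hul, hne⟩ := deleteEdges_adj.1 hul
    exact hne (hleaf u hul ▸ rfl)
  refine lt_domNum_iff.2 fun S' hS' => ?_
  have hlS' : l ∈ S' := (hS' l).resolve_right fun ⟨u, _, hul⟩ => hiso u hul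
  have hdomC : ∀ x ∈ C, x ∈ S'.erase l ∨ ∃ u ∈ S'.erase l, G.Adj u x := by
    intro x hx
    have hxl : x ≠ l := by rintro rfl; contradiction
    refine (hS' x).imp (Finset.mem_erase.2 ⟨hxl, ·⟩) fun ⟨u, huS', hux⟩ => ?_
    have hul : u ≠ l := by rintro rfl; exact hiso x hux.symm
    exact ⟨u, Finset.mem_erase.2 ⟨hul, huS'⟩, (deleteEdges_adj.1 hux).1⟩
  calc G.domNum ≤ C.card := hdom.domNum_le
    _ ≤ (S'.erase l).card := hC.card_le hdomC
    _ < S'.card := Finset.card_erase_lt_of_mem hlS'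

theorem IsDisjointUnionOfStars.domNum_lt_domNum_deleteEdges [Fintype V]
    (h : G.IsDisjointUnionOfStars) {e : Sym2 V} (he : e ∈ G.edgeSet) :
    G.domNum < (G.deleteEdges {e}).domNum := by
  classical
  obtain ⟨C, hu, hcc, hll, -⟩ := h
  have hC : G.IsPacking ↑C.toFinset := by
    simpa using isPacking_of_existsUnique_adj hu hcc
  have hdom : G.IsDomSet C.toFinset := fun v => by
    by_cases hv : v ∈ C
    · exact Or.inl (Set.mem_toFinset.2 hv)
    · obtain ⟨c, ⟨hc, hcv⟩, -⟩ := hu v hv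
      exact Or.inr ⟨c, Set.mem_toFinset.2 hc, hcv⟩
  have center_leaf {c l} (hc : c ∈ C) (hl : l ∉ C) (hcl : G.Adj c l) :
      G.domNum < (G.deleteEdges {s(c, l)}).domNum :=
    G.domNum_lt_domNum_deleteEdges hC hdom (by simpa using hl) fun u hul =>
      (hu l hl).unique ⟨by_contra fun hu' => hll u hu' l hl hul, hul⟩ ⟨hc, hcl⟩
  induction e using Sym2.ind with
  | h a b =>
    by_cases ha : a ∈ C
    · exact center_leaf ha (fun hb => hcc a ha b hb he) he
    · have hb : b ∈ C := by_contra fun hb => hll a ha b hb he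
      exact Sym2.eq_swap ▸ center_leaf hb ha (G.adj_symm he)

end SimpleGraph

theorem edge_domination_critical_iff_union_of_stars [Fintype V] (G : SimpleGraph V)
    (hiso : ∀ v : V, ∃ u, G.Adj v u) :
    (∀ e ∈ G.edgeSet, G.domNum < (G.deleteEdges {e}).domNum) ↔
      G.IsDisjointUnionOfStars := by
  refine ⟨fun hcrit => ?_, fun h e he => h.domNum_lt_domNum_deleteEdges he⟩
  obtain ⟨S, hS, hcard⟩ := G.exists_isDomSet_card_eq_domNum
  refine isDisjointUnionOfStars_of_isDomSet hiso hS fun e he hSe => ?_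
  exact (hcrit e he).not_ge (hcard ▸ hSe.domNum_le)
end

section
/- If G is a connected graph with at least one edge, then b(G) ≤ Δ(G) + λ(G) − 1, where λ(G) is the edge-connectivity. -/
open SimpleGraph

variable {V : Type*}

/-- The edge-connectivity of `G`: the minimum number of edges whose removal
disconnects the graph. -/
noncomputable def SimpleGraph.edgeConn [Fintype V] (G : SimpleGraph V) : ℕ :=
  sInf {n | ∃ B : Finset (Sym2 V), B.card = n ∧ ↑B ⊆ G.edgeSet ∧
    ¬ (G.deleteEdges ↑B).Connected}

lemma SimpleGraph.domNum_le_card [Fintype V] (G : SimpleGraph V) {S : Finset V}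
    (h : G.IsDomSet S) : G.domNum ≤ S.card :=
  Nat.sInf_le ⟨S, rfl, h⟩

lemma SimpleGraph.exists_min_domSet [Fintype V] (G : SimpleGraph V) :
    ∃ S : Finset V, S.card = G.domNum ∧ G.IsDomSet S := by
  have hne : {n | ∃ S : Finset V, S.card = n ∧ G.IsDomSet S}.Nonempty :=
    ⟨(Finset.univ : Finset V).card, Finset.univ, rfl, fun v => Or.inl (Finset.mem_univ v)⟩
  exact Nat.sInf_mem hne

lemma SimpleGraph.domNum_mono [Fintype V] {G H : SimpleGraph V} (h : H ≤ G) :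
    G.domNum ≤ H.domNum := by
  obtain ⟨S, hcard, hdom⟩ := H.exists_min_domSet
  exact hcard ▸ G.domNum_le_card (fun v => (hdom v).imp id fun ⟨x, hx, hadj⟩ => ⟨x, hx, h hadj⟩)

lemma SimpleGraph.reachable_of_reachable_of_forall_adj {G H : SimpleGraph V}
    (h            : ∀ x y, G.Adj x y → H.Reachable x y) {a b : V}
    (hr : G.Reachable a b) : H.Reachable a b := by
  obtain ⟨p⟩ := hr
  induction p with
  | nil => exact Reachable.refl _
  | cons hadj _ ih => exact (h _ _ hadj).trans ih

set_option maxHeartbeats 1000000 in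
theorem bondage_le_maxDegree_add_edgeConn_sub_one [Fintype V]
    (G : SimpleGraph V) [DecidableRel G.Adj]
    (hG : G.Connected) (hE : G.edgeSet.Nonempty) :
    G.bondageNum ≤ G.maxDegree + G.edgeConn - 1 := by
  classical
  -- a minimum edge-disconnecting set exists
  have hconnSet : {n | ∃ B : Finset (Sym2 V), B.card = n ∧ ↑B ⊆ G.edgeSet ∧
      ¬ (G.deleteEdges ↑B).Connected}.Nonempty := by
    refine ⟨G.edgeFinset.card, G.edgeFinset, rfl, by simp, ?_⟩
    have hbot : G.deleteEdges ↑G.edgeFinset = ⊥ := by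
      ext x y
      simp
    rw [hbot]
    intro hc
    obtain ⟨e, he⟩ := hE
    induction e with
    | h x y =>
      have : x ≠ y := (G.ne_of_adj (by rwa [SimpleGraph.mem_edgeSet] at he))
      exact this (reachable_bot.mp (hc.preconnected x y))
  obtain ⟨F, hFcard, hFsub, hFdis⟩ := Nat.sInf_mem hconnSet
  set H : SimpleGraph V := G.deleteEdges ↑F with hH
  -- there is an edge of `G` crossing between components of `H`
  have hcross : ∃ u w, G.Adj u w ∧ ¬ H.Reachable u w := by
    by_contra hc
    push_neg at hc
    apply hFdis
    rw [connected_iff]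
    exact ⟨fun x y => SimpleGraph.reachable_of_reachable_of_forall_adj hc
      (hG.preconnected x y), hG.nonempty⟩
  obtain ⟨u, w, huw, hnr⟩ := hcross
  have heF : s(u, w) ∈ F := by
    by_contra h
    exact hnr ⟨SimpleGraph.Walk.cons (by simp [hH, deleteEdges_adj, huw, h]) SimpleGraph.Walk.nil⟩
  have hwu : w ≠ u := (G.ne_of_adj huw).symm
  set γ := G.domNum with hγ
  -- the two candidate bondage sets
  set B₁ : Finset (Sym2 V) := F ∪ G.incidenceFinset u with hB₁
  set B₂ : Finset (Sym2 V) := F ∪ G.incidenceFinset w with hB₂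
  have hIsub : ∀ z : V, ↑(F ∪ G.incidenceFinset z) ⊆ G.edgeSet := by
    intro z e he
    rcases Finset.mem_union.mp (by exact_mod_cast he) with h | h
    · exact hFsub (by exact_mod_cast h)
    · rw [mem_incidenceFinset] at h
      exact h.1
  -- cardinality bound
  have hcard : ∀ z : V, s(u, w) ∈ G.incidenceFinset z →
      (F ∪ G.incidenceFinset z).card ≤ G.maxDegree + G.edgeConn - 1 := by
    intro z hz
    have hsub : F ∪ G.incidenceFinset z ⊆ F ∪ (G.incidenceFinset z).erase s(u, w) := by
      intro e he
      rcases Finset.mem_union.mp he with h | h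
      · exact Finset.mem_union_left _ h
      · by_cases hew : e = s(u, w)
        · exact Finset.mem_union_left _ (hew ▸ heF)
        · exact Finset.mem_union_right _ (Finset.mem_erase.mpr ⟨hew, h⟩)
    have h1 : (F ∪ G.incidenceFinset z).card ≤
        F.card + ((G.incidenceFinset z).card - 1) := by
      calc (F ∪ G.incidenceFinset z).card
          ≤ (F ∪ (G.incidenceFinset z).erase s(u, w)).card := Finset.card_le_card hsub
        _ ≤ F.card + ((G.incidenceFinset z).erase s(u, w)).card := Finset.card_union_le _ _
        _ = F.card + ((G.incidenceFinset z).card - 1) := by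
            rw [Finset.card_erase_of_mem hz]
    have hdeg : (G.incidenceFinset z).card = G.degree z := G.card_incidenceFinset_eq_degree z
    have hdegle : G.degree z ≤ G.maxDegree := G.degree_le_maxDegree z
    have hdegpos : 1 ≤ (G.incidenceFinset z).card := Finset.card_pos.mpr ⟨_, hz⟩
    have hFconn : F.card = G.edgeConn := hFcard
    omega
  have hz₁ : s(u, w) ∈ G.incidenceFinset u := by
    rw [mem_incidenceFinset]
    exact G.mk'_mem_incidenceSet_left_iff.mpr huw
  have hz₂ : s(u, w) ∈ G.incidenceFinset w := by
    rw [mem_incidenceFinset]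
    exact G.mk'_mem_incidenceSet_right_iff.mpr huw
  -- it suffices that one of B₁, B₂ increases the domination number
  suffices hkey : γ < (G.deleteEdges ↑B₁).domNum ∨ γ < (G.deleteEdges ↑B₂).domNum by
    rcases hkey with h | h
    · exact le_trans (Nat.sInf_le ⟨B₁, rfl, hIsub u, h⟩) (hcard u hz₁)
    · exact le_trans (Nat.sInf_le ⟨B₂, rfl, hIsub w, h⟩) (hcard w hz₂)
  by_contra hcon
  push_neg at hcon
  obtain ⟨hle₁, hle₂⟩ := hcon
  obtain ⟨D₁, hD₁card, hD₁⟩ := (G.deleteEdges ↑B₁).exists_min_domSet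
  obtain ⟨D₂, hD₂card, hD₂⟩ := (G.deleteEdges ↑B₂).exists_min_domSet
  have hD₁le : D₁.card ≤ γ := hD₁card ▸ hle₁
  have hD₂le : D₂.card ≤ γ := hD₂card ▸ hle₂
  -- basic facts about adjacency in the deleted graphs
  have hadj₁ : ∀ x v : V, (G.deleteEdges ↑B₁).Adj x v →
      G.Adj x v ∧ H.Adj x v ∧ x ≠ u ∧ v ≠ u := by
    intro x v hxv
    rw [deleteEdges_adj] at hxv
    obtain ⟨hxvG, hxvB⟩ := hxv
    have hnF : s(x, v) ∉ (↑F : Set (Sym2 V)) := fun h =>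
      hxvB (by exact_mod_cast Finset.mem_union_left _ (by exact_mod_cast h))
    have hnI : s(x, v) ∉ G.incidenceFinset u := fun h =>
      hxvB (by exact_mod_cast Finset.mem_union_right _ h)
    rw [mem_incidenceFinset, mk'_mem_incidenceSet_iff] at hnI
    push_neg at hnI
    have := hnI hxvG
    exact ⟨hxvG, deleteEdges_adj.mpr ⟨hxvG, hnF⟩, fun h => this.1 h.symm, fun h => this.2 h.symm⟩
  have hadj₂ : ∀ x v : V, (G.deleteEdges ↑B₂).Adj x v →
      G.Adj x v ∧ H.Adj x v ∧ x ≠ w ∧ v ≠ w := by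
    intro x v hxv
    rw [deleteEdges_adj] at hxv
    obtain ⟨hxvG, hxvB⟩ := hxv
    have hnF : s(x, v) ∉ (↑F : Set (Sym2 V)) := fun h =>
      hxvB (by exact_mod_cast Finset.mem_union_left _ (by exact_mod_cast h))
    have hnI : s(x, v) ∉ G.incidenceFinset w := fun h =>
      hxvB (by exact_mod_cast Finset.mem_union_right _ h)
    rw [mem_incidenceFinset, mk'_mem_incidenceSet_iff] at hnI
    push_neg at hnI
    have := hnI hxvG
    exact ⟨hxvG, deleteEdges_adj.mpr ⟨hxvG, hnF⟩, fun h => this.1 h.symm, fun h => this.2 h.symm⟩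
  -- u is isolated in G - B₁, so u ∈ D₁; similarly w ∈ D₂
  have huD₁ : u ∈ D₁ := by
    rcases hD₁ u with h | ⟨x, _, hx⟩
    · exact h
    · exact absurd rfl (hadj₁ x u hx).2.2.2
  have hwD₂ : w ∈ D₂ := by
    rcases hD₂ w with h | ⟨x, _, hx⟩
    · exact h
    · exact absurd rfl (hadj₂ x w hx).2.2.2
  set P : V → Prop := fun v => H.Reachable u v with hP
  set A₁ : Finset V := (D₁.filter P).erase u with hA₁
  set C₁ : Finset V := D₁.filter (fun v => ¬ P v) with hC₁
  set A₂ : Finset V := D₂.filter P with hA₂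
  set C₂ : Finset V := (D₂.filter (fun v => ¬ P v)).erase w with hC₂
  have hPu : P u := Reachable.refl u
  have hPw : ¬ P w := hnr
  -- cardinality relations
  have h1 : A₁.card + C₁.card + 1 ≤ γ := by
    have hu : u ∈ D₁.filter P := Finset.mem_filter.mpr ⟨huD₁, hPu⟩
    have e1 : A₁.card = (D₁.filter P).card - 1 := Finset.card_erase_of_mem hu
    have e2 : (D₁.filter P).card + C₁.card = D₁.card :=
      Finset.card_filter_add_card_filter_not (p := P)
    have e3 : 1 ≤ (D₁.filter P).card := Finset.card_pos.mpr ⟨u, hu⟩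
    omega
  have h2 : A₂.card + C₂.card + 1 ≤ γ := by
    have hw : w ∈ D₂.filter (fun v => ¬ P v) := Finset.mem_filter.mpr ⟨hwD₂, hPw⟩
    have e1 : C₂.card = (D₂.filter (fun v => ¬ P v)).card - 1 := Finset.card_erase_of_mem hw
    have e2 : A₂.card + (D₂.filter (fun v => ¬ P v)).card = D₂.card :=
      Finset.card_filter_add_card_filter_not (p := P)
    have e3 : 1 ≤ (D₂.filter (fun v => ¬ P v)).card := Finset.card_pos.mpr ⟨w, hw⟩
    omega
  -- S' = A₂ ∪ C₁ dominates G
  have h3 : γ ≤ A₂.card + C₁.card := by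
    have hdom : G.IsDomSet (A₂ ∪ C₁) := by
      intro v
      by_cases hPv : P v
      · rcases hD₂ v with h | ⟨x, hxD, hx⟩
        · exact Or.inl (Finset.mem_union_left _ (Finset.mem_filter.mpr ⟨h, hPv⟩))
        · obtain ⟨hxG, hxH, _, _⟩ := hadj₂ x v hx
          have hPx : P x := hPv.trans hxH.reachable.symm
          exact Or.inr ⟨x, Finset.mem_union_left _ (Finset.mem_filter.mpr ⟨hxD, hPx⟩), hxG⟩
      · rcases hD₁ v with h | ⟨x, hxD, hx⟩
        · exact Or.inl (Finset.mem_union_right _ (Finset.mem_filter.mpr ⟨h, hPv⟩))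
        · obtain ⟨hxG, hxH, _, _⟩ := hadj₁ x v hx
          have hPx : ¬ P x := fun hp => hPv (hp.trans hxH.reachable)
          exact Or.inr ⟨x, Finset.mem_union_right _ (Finset.mem_filter.mpr ⟨hxD, hPx⟩), hxG⟩
    calc γ ≤ (A₂ ∪ C₁).card := G.domNum_le_card hdom
      _ ≤ A₂.card + C₁.card := Finset.card_union_le _ _
  -- S = A₁ ∪ C₂ ∪ {u} dominates G
  have h4 : γ ≤ A₁.card + C₂.card + 1 := by
    have hdom : G.IsDomSet (A₁ ∪ C₂ ∪ {u}) := by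
      intro v
      by_cases hvu : v = u
      · exact Or.inl (Finset.mem_union_right _ (by simp [hvu]))
      · by_cases hvw : v = w
        · exact Or.inr ⟨u, Finset.mem_union_right _ (by simp), hvw ▸ huw⟩
        · by_cases hPv : P v
          · rcases hD₁ v with h | ⟨x, hxD, hx⟩
            · exact Or.inl (Finset.mem_union_left _ (Finset.mem_union_left _
                (Finset.mem_erase.mpr ⟨hvu, Finset.mem_filter.mpr ⟨h, hPv⟩⟩)))
            · obtain ⟨hxG, hxH, hxu, _⟩ := hadj₁ x v hx
              have hPx : P x := hPv.trans hxH.reachable.symm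
              exact Or.inr ⟨x, Finset.mem_union_left _ (Finset.mem_union_left _
                (Finset.mem_erase.mpr ⟨hxu, Finset.mem_filter.mpr ⟨hxD, hPx⟩⟩)), hxG⟩
          · rcases hD₂ v with h | ⟨x, hxD, hx⟩
            · exact Or.inl (Finset.mem_union_left _ (Finset.mem_union_right _
                (Finset.mem_erase.mpr ⟨hvw, Finset.mem_filter.mpr ⟨h, hPv⟩⟩)))
            · obtain ⟨hxG, hxH, hxw, _⟩ := hadj₂ x v hx
              have hPx : ¬ P x := fun hp => hPv (hp.trans hxH.reachable)
              exact Or.inr ⟨x, Finset.mem_union_left _ (Finset.mem_union_right _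
                (Finset.mem_erase.mpr ⟨hxw, Finset.mem_filter.mpr ⟨hxD, hPx⟩⟩)), hxG⟩
    calc γ ≤ (A₁ ∪ C₂ ∪ {u}).card := G.domNum_le_card hdom
      _ ≤ (A₁ ∪ C₂).card + ({u} : Finset V).card := Finset.card_union_le _ _
      _ ≤ A₁.card + C₂.card + 1 := by
          have := Finset.card_union_le A₁ C₂
          simp only [Finset.card_singleton]
          omega
  omega
end

section
/- For the corona G = H ∘ K₁ of a graph H with minimum degree δ(H) ≥ 1, the bondage number satisfies b(G) = δ(H) + 1. -/
open SimpleGraph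

variable {V : Type*}

/-- The corona `H ∘ K₁`: for each vertex `u` of `H` (copy `Sum.inl u`) attach a new
pendant vertex `Sum.inr u` joined to it. -/
def SimpleGraph.corona (H : SimpleGraph V) : SimpleGraph (V ⊕ V) :=
  SimpleGraph.fromRel fun a b =>
    match a, b with
    | Sum.inl u, Sum.inl v => H.Adj u v
    | Sum.inl u, Sum.inr v => u = v
    | _, _ => False

/-!
In any spanning subgraph of `H ∘ K₁`, the pendant vertex `inr u` can only be dominated by
itself or by `inl u`, so a dominating set meets each of the `n` pairs `{inl u, inr u}`; it has
at least `n + 1` elements if it must contain a whole pair, e.g. when `inl u` is isolated.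
Deleting the `δ(H) + 1` edges at `inl u` for `u` of minimum degree therefore raises the
domination number. Conversely, after deleting a set `B` of at most `δ(H)` edges, choosing
`inr u` when the pendant edge at `u` lies in `B` and `inl u` otherwise still dominates: if the
pendant edge at `u` is deleted, fewer than `deg u` neighbours `v` of `u` are blocked, i.e. have
`uv ∈ B` or their own pendant edge in `B`.
-/

open Finset Sum

lemma Finset.card_add_card_toLeft_inter_toRight [Fintype V] [DecidableEq V] {S : Finset (V ⊕ V)}
    (hS : ∀ u, inl u ∈ S ∨ inr u ∈ S) :
    Fintype.card V + #(S.toLeft ∩ S.toRight) = #S := by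
  have hcover : S.toLeft ∪ S.toRight = univ := eq_univ_of_forall fun u => by simpa using hS u
  rw [← card_univ, ← hcover, card_union_add_card_inter, card_toLeft_add_card_toRight]

namespace SimpleGraph

section Domination

variable {G : SimpleGraph V}

lemma IsDomSet.mem_of_forall_not_adj {S : Finset V} (hS : G.IsDomSet S) {v : V}
    (hv : ∀ u, ¬ G.Adj u v) : v ∈ S :=
  (hS v).resolve_right fun ⟨u, _, huv⟩ => hv u huv

variable [Fintype V]

lemma domNum_le_card_s18 {S : Finset V} (hS : G.IsDomSet S) : G.domNum ≤ #S :=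
  Nat.sInf_le ⟨S, rfl, hS⟩

lemma le_domNum {m : ℕ} (h : ∀ S, G.IsDomSet S → m ≤ #S) : m ≤ G.domNum :=
  le_csInf ⟨_, univ, rfl, fun v => .inl (mem_univ v)⟩ (by rintro _ ⟨S, rfl, hS⟩; exact h S hS)

lemma bondageNum_eq {k : ℕ}
    (hB : ∃ B : Finset (Sym2 V), #B = k ∧ ↑B ⊆ G.edgeSet ∧
      G.domNum < (G.deleteEdges ↑B).domNum)
    (hmin : ∀ B : Finset (Sym2 V), #B < k → (G.deleteEdges ↑B).domNum ≤ G.domNum) :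
    G.bondageNum = k := by
  refine le_antisymm (Nat.sInf_le hB) (le_csInf ⟨k, hB⟩ ?_)
  rintro _ ⟨B, rfl, -, hlt⟩
  by_contra! hB
  exact (hmin B hB).not_gt hlt

end Domination

section Corona

variable {H : SimpleGraph V} {u v : V} {G : SimpleGraph (V ⊕ V)} {S : Finset (V ⊕ V)}

@[simp] lemma corona_adj_inl_inl : H.corona.Adj (inl u) (inl v) ↔ H.Adj u v := by
  simp only [corona, fromRel_adj, ne_eq, inl.injEq]
  exact ⟨fun ⟨_, h⟩ => h.elim id H.adj_symm, fun h => ⟨h.ne, .inl h⟩⟩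

@[simp] lemma corona_adj_inl_inr : H.corona.Adj (inl u) (inr v) ↔ u = v := by
  simp [corona]

@[simp] lemma corona_adj_inr_inl : H.corona.Adj (inr u) (inl v) ↔ v = u := by
  rw [adj_comm, corona_adj_inl_inr]

@[simp] lemma not_corona_adj_inr_inr : ¬ H.corona.Adj (inr u) (inr v) := by
  simp [corona]

lemma eq_inl_of_adj_inr_of_le_corona (hG : G ≤ H.corona) {x : V ⊕ V} (hx : G.Adj x (inr u)) :
    x = inl u := by
  cases x with
  | inl w => rw [corona_adj_inl_inr.mp (hG hx)]
  | inr w => exact (not_corona_adj_inr_inr (hG hx)).elim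

lemma IsDomSet.inl_mem_or_inr_mem_of_le_corona (hG : G ≤ H.corona) (hS : G.IsDomSet S)
    (u : V) : inl u ∈ S ∨ inr u ∈ S :=
  (hS (inr u)).symm.imp_left fun ⟨_, hx, hadj⟩ => eq_inl_of_adj_inr_of_le_corona hG hadj ▸ hx

variable [Fintype V]

lemma IsDomSet.card_le_of_le_corona (hG : G ≤ H.corona) (hS : G.IsDomSet S) :
    Fintype.card V ≤ #S := by
  classical
  exact Nat.le.intro (card_add_card_toLeft_inter_toRight (hS.inl_mem_or_inr_mem_of_le_corona hG))

lemma IsDomSet.card_lt_of_le_corona (hG : G ≤ H.corona) (hS : G.IsDomSet S)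
    (hu : ∀ x, ¬ G.Adj x (inl u)) : Fintype.card V < #S := by
  classical
  have hl : inl u ∈ S := hS.mem_of_forall_not_adj hu
  have hr : inr u ∈ S := hS.mem_of_forall_not_adj fun x hx =>
    hu (inr u) (eq_inl_of_adj_inr_of_le_corona hG hx ▸ hx.symm)
  have hinter : 0 < #(S.toLeft ∩ S.toRight) := card_pos.mpr ⟨u, by simp [hl, hr]⟩
  have := card_add_card_toLeft_inter_toRight (hS.inl_mem_or_inr_mem_of_le_corona hG)
  omega

lemma domNum_corona : H.corona.domNum = Fintype.card V := by
  refine le_antisymm ?_ (le_domNum fun S hS => hS.card_le_of_le_corona le_rfl)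
  have hdom : H.corona.IsDomSet (univ.map .inl) := by
    rintro (w | w)
    · exact .inl (by simp)
    · exact .inr ⟨inl w, by simp, by simp⟩
  simpa using domNum_le_card_s18 hdom

lemma domNum_corona_lt_deleteIncidenceSet (u : V) :
    H.corona.domNum < (H.corona.deleteIncidenceSet (inl u)).domNum := by
  rw [domNum_corona, Nat.lt_iff_add_one_le]
  exact le_domNum fun S hS => hS.card_lt_of_le_corona (deleteIncidenceSet_le _ _)
    fun x hx => (deleteIncidenceSet_adj.mp hx).2.2 rfl

variable [DecidableRel H.Adj]

lemma degree_corona_inl [Fintype (H.corona.neighborSet (inl u))] :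
    H.corona.degree (inl u) = H.degree u + 1 := by
  classical
  have : H.corona.neighborFinset (inl u) = insert (inr u) ((H.neighborFinset u).map .inl) := by
    ext (w | w) <;> simp [eq_comm]
  rw [← card_neighborFinset_eq_degree, this, card_insert_of_notMem (by simp), card_map,
    card_neighborFinset_eq_degree]

/-- The blocked neighbours `v` of `u` inject into `B` minus the pendant edge of `u`: charge `v`
the edge `uv` if it lies in `B`, and its own pendant edge otherwise. -/
lemma exists_adj_of_card_le_minDegree {B : Finset (Sym2 (V ⊕ V))} (hB : #B ≤ H.minDegree)
    (hu : s(inl u, inr u) ∈ B) : ∃ v, H.Adj u v ∧ s(inl u, inl v) ∉ B ∧ s(inl v, inr v) ∉ B := by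
  classical
  by_contra! hblocked
  let charge (v : V) : Sym2 (V ⊕ V) :=
    if s(inl u, inl v) ∈ B then s(inl u, inl v) else s(inl v, inr v)
  have hmaps : ∀ v ∈ H.neighborFinset u, charge v ∈ B.erase s(inl u, inr u) := by
    intro v hv
    rw [mem_neighborFinset] at hv
    by_cases huv : s(inl u, inl v) ∈ B
    · simp [charge, huv]
    · simp [charge, huv, hblocked v hv huv, hv.ne']
  have hinj : Set.InjOn charge (H.neighborFinset u) := by
    intro a _ b _ hab
    simp only [charge] at hab
    split_ifs at hab <;> aesop
  have hcard := card_le_card_of_injOn charge hmaps hinj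
  rw [card_erase_of_mem hu, card_neighborFinset_eq_degree] at hcard
  have hdeg := H.minDegree_le_degree u
  have hBpos : 0 < #B := card_pos.mpr ⟨_, hu⟩
  omega

lemma domNum_deleteEdges_corona_le {B : Finset (Sym2 (V ⊕ V))} (hB : #B ≤ H.minDegree) :
    (H.corona.deleteEdges ↑B).domNum ≤ Fintype.card V := by
  classical
  let pick (w : V) : V ⊕ V := if s(inl w, inr w) ∈ B then inr w else inl w
  have hdom : (H.corona.deleteEdges ↑B).IsDomSet (univ.image pick) := by
    rintro (w | w) <;> by_cases hw : s(inl w, inr w) ∈ B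
    · obtain ⟨v, hwv, hwvB, hvB⟩ := exists_adj_of_card_le_minDegree hB hw
      exact .inr ⟨inl v, mem_image.mpr ⟨v, mem_univ v, by simp [pick, hvB]⟩, by
        simp [hwv.symm, Sym2.eq_swap, hwvB]⟩
    · exact .inl (mem_image.mpr ⟨w, mem_univ w, by simp [pick, hw]⟩)
    · exact .inl (mem_image.mpr ⟨w, mem_univ w, by simp [pick, hw]⟩)
    · exact .inr ⟨inl w, mem_image.mpr ⟨w, mem_univ w, by simp [pick, hw]⟩, by simp [hw]⟩
  exact (domNum_le_card_s18 hdom).trans (card_image_le.trans_eq card_univ)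

end Corona

end SimpleGraph

theorem bondage_corona [Fintype V] (H : SimpleGraph V) [DecidableRel H.Adj]
    (hδ : 1 ≤ H.minDegree) :
    H.corona.bondageNum = H.minDegree + 1 := by
  classical
  have : Nonempty V := not_isEmpty_iff.mp fun _ => by simp [minDegree_of_subsingleton] at hδ
  obtain ⟨u, hu⟩ := H.exists_minimal_degree_vertex
  refine bondageNum_eq ⟨H.corona.incidenceFinset (inl u), ?_, ?_, ?_⟩ fun B hB => ?_
  · rw [card_incidenceFinset_eq_degree, degree_corona_inl, hu]
  · simpa using H.corona.incidenceSet_subset (inl u)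
  · rw [coe_incidenceFinset]
    exact domNum_corona_lt_deleteIncidenceSet u
  · rw [domNum_corona]
    exact domNum_deleteEdges_corona_le (Nat.lt_succ_iff.mp hB)
end
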